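/- The function f ↦ ‖f‖_x on A is a multiplicative non-Archimedean norm extending the trivial valuation on k; precisely: ‖1‖_x = 1; ‖f‖_x = 0 if and only if f = 0; ‖f₁ f₂‖_x = ‖f₁‖_x · ‖f₂‖_x for all f₁, f₂ ∈ A; ‖f₁ + f₂‖_x ≤ max(‖f₁‖_x, ‖f₂‖_x) for all f₁, f₂ ∈ A; and ‖c f‖_x = ‖f‖_x for every nonzero c ∈ k and f ∈ A. (Consequently ‖·‖_x extends to a valuation on the fraction field Frac(A), trivial on k.) -/

import Mathlib

/-!
Write `Δ f = ∑ lᵢ ⊗ rᵢ` with the `lᵢ` linearly independent. Then `x (g • f) = ∑ g(lᵢ) x(rᵢ)`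
ranges over a finite-dimensional `k`-subspace of `L`, on which a valuation trivial on `k` takes
only finitely many values (elements of distinct nonzero values are linearly independent). So the
supremum `‖f‖ₓ` is a maximum, and the points where it is not attained are those whose coordinates
`(g(lᵢ))ᵢ` lie in the proper subspace `{c | ‖∑ cᵢ x(rᵢ)‖ < ‖f‖ₓ}`: they lie in the zero set of a
nonzero `F ∈ A`. As `A` is a domain, the sets where the suprema for `f₁` and `f₂` are attained
meet, which gives multiplicativity.

If `‖f‖ₓ = 0`, the functions all of whose translates are killed by `x` form a proper
translation-invariant ideal containing `f`. A `k`-point `g₀` vanishing on it (Nullstellensatz)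
vanishes on all translates of `f`; since the points form a group under convolution, every point
vanishes at `f`, hence `f = 0`.
-/

open TensorProduct

/-- The translate `g • f` of an element `f` of a bialgebra `A` by a `k`-point
`g : A →ₐ[k] k`: the image of the comultiplication `Δ f ∈ A ⊗[k] A` under
`g ⊗ id` followed by the identification `k ⊗[k] A ≅ A`. -/
noncomputable def ptTranslate {k A : Type*} [CommSemiring k] [Semiring A]
    [Bialgebra k A] (g : A →ₐ[k] k) (f : A) : A :=
  (TensorProduct.lid k A)
    ((TensorProduct.map g.toLinearMap (LinearMap.id : A →ₗ[k] A))
      (Coalgebra.comul (R := k) f))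

/-- `‖f‖ₓ := sup { ‖x(g • f)‖ : g : A →ₐ[k] k }`. -/
noncomputable def normx {k A L : Type*} [CommSemiring k] [Semiring A]
    [Bialgebra k A] [CommSemiring L] [Algebra k L]
    (v : L → NNReal) (x : A →ₐ[k] L) (f : A) : NNReal :=
  ⨆ g : A →ₐ[k] k, v (x (ptTranslate g f))

open WithConv

section Translate

variable {k A : Type*} [CommSemiring k] [CommSemiring A] [Bialgebra k A]

instance : Nonempty (A →ₐ[k] k) := ⟨Bialgebra.counitAlgHom k A⟩

noncomputable def translateAlgHom (g : A →ₐ[k] k) : A →ₐ[k] A :=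
  (Algebra.TensorProduct.lid k A).toAlgHom.comp
    ((Algebra.TensorProduct.map g (AlgHom.id k A)).comp (Bialgebra.comulAlgHom k A))

lemma ptTranslate_repr {ι : Type*} (g : A →ₐ[k] k) {f : A} (r : Coalgebra.Repr k f ι) :
    ptTranslate g f = ∑ i ∈ r.index, g (r.left i) • r.right i := by
  simp [ptTranslate, ← r.eq, map_sum]

lemma translateAlgHom_apply (g : A →ₐ[k] k) (f : A) :
    translateAlgHom g f = ptTranslate g f := by
  let r := Coalgebra.Repr.arbitrary k f
  simp [translateAlgHom, ptTranslate_repr g r, ← r.eq, map_sum]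

@[simp] lemma ptTranslate_one (g : A →ₐ[k] k) : ptTranslate g (1 : A) = 1 := by
  rw [← translateAlgHom_apply, map_one]

@[simp] lemma ptTranslate_zero (g : A →ₐ[k] k) : ptTranslate g (0 : A) = 0 := by
  rw [← translateAlgHom_apply, map_zero]

lemma ptTranslate_add (g : A →ₐ[k] k) (f₁ f₂ : A) :
    ptTranslate g (f₁ + f₂) = ptTranslate g f₁ + ptTranslate g f₂ := by
  simp only [← translateAlgHom_apply, map_add]

lemma ptTranslate_mul (g : A →ₐ[k] k) (f₁ f₂ : A) :
    ptTranslate g (f₁ * f₂) = ptTranslate g f₁ * ptTranslate g f₂ := by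
  simp only [← translateAlgHom_apply, map_mul]

@[simp] lemma ptTranslate_algebraMap (g : A →ₐ[k] k) (c : k) :
    ptTranslate g (algebraMap k A c) = algebraMap k A c := by
  rw [← translateAlgHom_apply, AlgHom.commutes]

lemma algHom_apply_ptTranslate {B : Type*} [CommSemiring B] [Algebra k B] (y : A →ₐ[k] B)
    (g : A →ₐ[k] k) (f : A) :
    y (ptTranslate g f) = (toConv ((Algebra.ofId k B).comp g) * toConv y) f := by
  let r := Coalgebra.Repr.arbitrary k f
  simp [AlgHom.convMul_apply, ← r.eq, ptTranslate_repr g r, map_sum, Algebra.smul_def]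

lemma point_apply_ptTranslate (g₀ g : A →ₐ[k] k) (f : A) :
    g₀ (ptTranslate g f) = (toConv g * toConv g₀) f := by
  simp [algHom_apply_ptTranslate]

lemma ptTranslate_ptTranslate (g g' : A →ₐ[k] k) (f : A) :
    ptTranslate g (ptTranslate g' f) = ptTranslate (toConv g' * toConv g).ofConv f := by
  -- translation by `g` is left convolution with `g`, viewed as an `A`-valued point
  have hT : toConv (translateAlgHom g) =
      toConv ((Algebra.ofId k A).comp g) * toConv (AlgHom.id k A) :=
    WithConv.ext <| AlgHom.ext fun f => by
      rw [ofConv_toConv, translateAlgHom_apply, ← algHom_apply_ptTranslate]; rfl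
  have hid := algHom_apply_ptTranslate (AlgHom.id k A) (toConv g' * toConv g).ofConv f
  rw [AlgHom.comp_convMul_distrib, toConv_ofConv, mul_assoc, ← hT, AlgHom.id_apply] at hid
  rw [hid, ← translateAlgHom_apply g, algHom_apply_ptTranslate]

end Translate

section Nullstellensatz

variable {k A : Type*} [Field k] [IsAlgClosed k] [CommRing A] [Algebra k A]
  [Algebra.FiniteType k A]

lemma exists_algHom_ker_eq (m : Ideal A) [m.IsMaximal] : ∃ g : A →ₐ[k] k, RingHom.ker g = m := by
  let := Ideal.Quotient.field m
  have : Module.Finite k (A ⧸ m) := finite_of_finite_type_of_isJacobsonRing k (A ⧸ m)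
  let e : k ≃ₐ[k] A ⧸ m :=
    AlgEquiv.ofBijective (Algebra.ofId k (A ⧸ m)) IsAlgClosed.algebraMap_bijective_of_isIntegral
  refine ⟨e.symm.toAlgHom.comp (Ideal.Quotient.mkₐ k m), Ideal.ext fun a => ?_⟩
  simp [Ideal.Quotient.eq_zero_iff_mem]

lemma exists_algHom_le_ker {I : Ideal A} (hI : I ≠ ⊤) : ∃ g : A →ₐ[k] k, I ≤ RingHom.ker g := by
  obtain ⟨m, hm, hIm⟩ := Ideal.exists_le_maximal I hI
  obtain ⟨g, hg⟩ := exists_algHom_ker_eq (k := k) m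
  exact ⟨g, hg ▸ hIm⟩

lemma eq_zero_of_forall_algHom_apply_eq_zero [IsReduced A] {f : A}
    (h : ∀ g : A →ₐ[k] k, g f = 0) : f = 0 := by
  have : IsJacobsonRing A := isJacobsonRing_of_finiteType (A := k)
  have hf : f ∈ (⊥ : Ideal A).jacobson := Ideal.mem_sInf.mpr fun {m} hm => by
    have := hm.2
    obtain ⟨g, hg⟩ := exists_algHom_ker_eq (k := k) m
    exact hg ▸ h g
  rw [← Ideal.radical_eq_jacobson] at hf
  obtain ⟨n, hn⟩ := hf
  exact IsReduced.eq_zero f ⟨n, Ideal.mem_bot.mp hn⟩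

lemma exists_algHom_apply_ne_zero [IsReduced A] {f : A} (hf : f ≠ 0) :
    ∃ g : A →ₐ[k] k, g f ≠ 0 := by
  contrapose! hf
  exact eq_zero_of_forall_algHom_apply_eq_zero hf

end Nullstellensatz

lemma eq_zero_of_forall_ptTranslate_eq_zero {k A B : Type*} [Field k] [IsAlgClosed k]
    [CommRing A] [IsReduced A] [HopfAlgebra k A] [Algebra.FiniteType k A]
    [CommRing B] [Nontrivial B] [Algebra k B] (y : A →ₐ[k] B) {f : A}
    (h : ∀ g : A →ₐ[k] k, y (ptTranslate g f) = 0) : f = 0 := by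
  let I : Ideal A := ⨅ g : A →ₐ[k] k, RingHom.ker (y.comp (translateAlgHom g))
  have mem_I {a : A} : a ∈ I ↔ ∀ g : A →ₐ[k] k, y (ptTranslate g a) = 0 := by
    simp [I, translateAlgHom_apply]
  have hI : I ≠ ⊤ := fun hI => one_ne_zero (α := B) <| by
    simpa using mem_I.1 (hI ▸ Submodule.mem_top : (1 : A) ∈ I) (Bialgebra.counitAlgHom k A)
  obtain ⟨g₀, hg₀⟩ := exists_algHom_le_ker (k := k) hI
  refine eq_zero_of_forall_algHom_apply_eq_zero (k := k) fun g => ?_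
  -- `g = g' * g₀` in the convolution group of points
  let g' := (toConv g * (toConv g₀)⁻¹).ofConv
  have hg' : ptTranslate g' f ∈ I := mem_I.2 fun g'' => by rw [ptTranslate_ptTranslate, h]
  have := hg₀ hg'
  rwa [RingHom.mem_ker, point_apply_ptTranslate, toConv_ofConv, inv_mul_cancel_right] at this

namespace Valuation

variable {k L Γ₀ : Type*} [Field k] [Field L] [Algebra k L] [LinearOrderedCommGroupWithZero Γ₀]
  (w : Valuation L Γ₀) [w.IsTrivialOn k]

lemma map_smul_of_ne_zero {c : k} (hc : c ≠ 0) (a : L) : w (c • a) = w a := by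
  rw [Algebra.smul_def, map_mul, IsTrivialOn.eq_one c hc, one_mul]

lemma map_smul_le (c : k) (a : L) : w (c • a) ≤ w a := by
  rcases eq_or_ne c 0 with rfl | hc
  · simp
  · exact (w.map_smul_of_ne_zero hc a).le

lemma linearIndependent_of_injective {ι : Type*} {a : ι → L} (h0 : ∀ i, a i ≠ 0)
    (hinj : Function.Injective (w ∘ a)) : LinearIndependent k a := by
  classical
  refine linearIndependent_iff'.2 fun s c hs i his => by_contra fun hci => ?_
  let t := s.filter (c · ≠ 0)
  obtain ⟨j, hjt, hmax⟩ := t.exists_max_image (w ∘ a) ⟨i, Finset.mem_filter.2 ⟨his, hci⟩⟩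
  have hcj : c j ≠ 0 := (Finset.mem_filter.1 hjt).2
  have hsum : ∑ l ∈ t, c l • a l = 0 := by
    rwa [Finset.sum_filter_of_ne (p := (c · ≠ 0)) fun l _ h hl => h (by rw [hl, zero_smul])]
  have hval := w.map_sum_eq_of_lt (f := fun l => c l • a l) hjt fun l hl => by
    obtain ⟨hlt, hlj⟩ := Finset.mem_sdiff.1 hl
    rw [w.map_smul_of_ne_zero (Finset.mem_filter.1 hlt).2, w.map_smul_of_ne_zero hcj]
    exact (hmax l hlt).lt_of_ne fun h => hlj (Finset.mem_singleton.2 (hinj h))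
  rw [hsum, map_zero, w.map_smul_of_ne_zero hcj] at hval
  exact h0 j ((map_eq_zero w).1 hval.symm)

lemma finite_image_of_finiteDimensional (U : Submodule k L) [FiniteDimensional k U] :
    (w '' U).Finite := by
  refine Set.Finite.of_sdiff ?_ (Set.finite_singleton 0)
  choose a haU hwa using fun γ : ↥(w '' U \ {0}) => γ.2.1
  have hli : LinearIndependent k fun γ => (⟨a γ, haU γ⟩ : U) := by
    refine LinearIndependent.of_comp U.subtype (w.linearIndependent_of_injective (fun γ hγ => ?_)
      fun γ γ' h => Subtype.ext ?_)
    · simp only [Function.comp_apply, Submodule.subtype_apply] at hγ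
      exact γ.2.2 (by rw [Set.mem_singleton_iff, ← hwa γ, hγ, map_zero])
    · simpa [hwa] using h
  exact Set.finite_coe_iff.mp hli.finite

lemma exists_dual_ne_zero_le_of_apply_ne_zero {E : Type*} [AddCommGroup E] [Module k E]
    (φ : E →ₗ[k] L) {e₀ : E} (h : w (φ e₀) ≠ 0) :
    ∃ ℓ : Module.Dual k E, ℓ ≠ 0 ∧ ∀ e, ℓ e ≠ 0 → w (φ e₀) ≤ w (φ e) := by
  let D : Submodule k E := Submodule.comap φ
    { w.ltAddSubgroup (Units.mk0 _ h) with
      smul_mem' := fun c a ha => (w.map_smul_le c a).trans_lt ha }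
  have hD : D < ⊤ := lt_top_iff_ne_top.2 fun hD =>
    lt_irrefl (w (φ e₀)) (hD ▸ Submodule.mem_top : e₀ ∈ D)
  obtain ⟨ℓ, hℓ, hℓD⟩ := Submodule.exists_dual_map_eq_bot_of_lt_top hD inferInstance
  refine ⟨ℓ, hℓ, fun e he => not_lt.1 fun hlt => he ?_⟩
  have : ℓ e ∈ D.map ℓ := Submodule.mem_map_of_mem hlt
  rwa [hℓD, Submodule.mem_bot] at this

end Valuation

lemma exists_linearIndependent_ptTranslate_eq {k A M : Type*} [Field k] [CommRing A]
    [Bialgebra k A] [AddCommGroup M] [Module k M] (y : A →ₗ[k] M) (f : A) :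
    ∃ (n : ℕ) (l : Fin n → A) (φ : (Fin n → k) →ₗ[k] M), LinearIndependent k l ∧
      ∀ g : A →ₐ[k] k, y (ptTranslate g f) = φ fun i => g (l i) := by
  let b := Module.Free.chooseBasis k A
  obtain ⟨c, hc⟩ := TensorProduct.eq_repr_basis_left b (Coalgebra.comul (R := k) f)
  let e := c.support.equivFin.symm
  refine ⟨_, fun i => b (e i), Fintype.linearCombination k fun i => y (c (e i)),
    b.linearIndependent.comp _ (Subtype.val_injective.comp e.injective), fun g => ?_⟩
  rw [ptTranslate_repr g ⟨c.support, b, c, hc⟩, Fintype.linearCombination_apply, map_sum,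
    ← Finset.sum_coe_sort, ← e.sum_comp]
  simp

section Norm

variable {k A L : Type*} [Field k] [CommRing A] [Bialgebra k A] [Field L] [Algebra k L]
  (x : A →ₐ[k] L) (w : Valuation L NNReal)

lemma normx_one : normx w x (1 : A) = 1 := by
  simp [normx]

lemma normx_zero : normx w x (0 : A) = 0 := by
  simp [normx]

variable [w.IsTrivialOn k]

lemma finite_range_valuation_ptTranslate (f : A) :
    (Set.range fun g : A →ₐ[k] k => w (x (ptTranslate g f))).Finite := by
  obtain ⟨n, l, φ, -, hφ⟩ := exists_linearIndependent_ptTranslate_eq x.toLinearMap f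
  refine (w.finite_image_of_finiteDimensional (LinearMap.range φ)).subset ?_
  rintro _ ⟨g, rfl⟩
  exact ⟨_, LinearMap.mem_range_self φ _, by rw [← hφ, AlgHom.toLinearMap_apply]⟩

lemma valuation_ptTranslate_le_normx (f : A) (g : A →ₐ[k] k) :
    w (x (ptTranslate g f)) ≤ normx w x f :=
  le_ciSup (finite_range_valuation_ptTranslate x w f).bddAbove g

lemma exists_valuation_ptTranslate_eq_normx (f : A) :
    ∃ g : A →ₐ[k] k, w (x (ptTranslate g f)) = normx w x f :=
  Set.Nonempty.csSup_mem (Set.range_nonempty _)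
    (finite_range_valuation_ptTranslate x w f)

lemma exists_ne_zero_forall_apply_ne_zero_eq_normx [Nontrivial A] (f : A) :
    ∃ F : A, F ≠ 0 ∧ ∀ g : A →ₐ[k] k, g F ≠ 0 → w (x (ptTranslate g f)) = normx w x f := by
  rcases eq_or_ne (normx w x f) 0 with h0 | h0
  · exact ⟨1, one_ne_zero, fun g _ =>
      le_antisymm (valuation_ptTranslate_le_normx x w f g) (h0 ▸ zero_le)⟩
  obtain ⟨g₀, hg₀⟩ := exists_valuation_ptTranslate_eq_normx x w f
  obtain ⟨n, l, φ, hl, hφ⟩ := exists_linearIndependent_ptTranslate_eq x.toLinearMap f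
  simp only [AlgHom.toLinearMap_apply] at hφ
  rw [← hg₀, hφ] at h0
  obtain ⟨ℓ, hℓ, hle⟩ := w.exists_dual_ne_zero_le_of_apply_ne_zero φ h0
  have hℓ_apply (e : Fin n → k) : ℓ e = ∑ i, e i * ℓ (Pi.single i 1) := by
    conv_lhs => rw [← (Pi.basisFun k (Fin n)).sum_repr e]
    simp [map_sum]
  refine ⟨∑ i, ℓ (Pi.single i 1) • l i, fun hF => hℓ ?_, fun g hg =>
    le_antisymm (valuation_ptTranslate_le_normx x w f g) ?_⟩
  · have hcoord := Fintype.linearIndependent_iff.1 hl _ hF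
    exact LinearMap.ext fun e => by simp [hℓ_apply e, hcoord]
  · rw [← hg₀, hφ, hφ]
    refine hle _ ?_
    rw [hℓ_apply]
    simpa [map_sum, mul_comm] using hg

lemma normx_add_le (f₁ f₂ : A) : normx w x (f₁ + f₂) ≤ max (normx w x f₁) (normx w x f₂) :=
  ciSup_le fun g => by
    rw [ptTranslate_add, map_add]
    exact (w.map_add _ _).trans (max_le_max (valuation_ptTranslate_le_normx x w f₁ g)
      (valuation_ptTranslate_le_normx x w f₂ g))

lemma normx_algebraMap_mul {c : k} (hc : c ≠ 0) (f : A) :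
    normx w x (algebraMap k A c * f) = normx w x f := by
  simp [normx, ptTranslate_mul, Valuation.IsTrivialOn.eq_one c hc]

end Norm

section HopfNorm

variable {k A L : Type*} [Field k] [IsAlgClosed k] [CommRing A] [HopfAlgebra k A]
  [Algebra.FiniteType k A] [Field L] [Algebra k L]
  (x : A →ₐ[k] L) (w : Valuation L NNReal) [w.IsTrivialOn k]

lemma normx_eq_zero_iff [IsReduced A] {f : A} : normx w x f = 0 ↔ f = 0 := by
  refine ⟨fun h => eq_zero_of_forall_ptTranslate_eq_zero x fun g => ?_, fun h => h ▸ normx_zero x w⟩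
  exact (map_eq_zero w).1 (le_antisymm (h ▸ valuation_ptTranslate_le_normx x w f g) zero_le)

-- Both suprema are attained on nonempty Zariski-open sets of points, which meet as `A` is a domain.
lemma normx_mul [IsDomain A] (f₁ f₂ : A) : normx w x (f₁ * f₂) = normx w x f₁ * normx w x f₂ := by
  refine le_antisymm (ciSup_le fun g => ?_) ?_
  · rw [ptTranslate_mul, map_mul, map_mul]
    exact mul_le_mul' (valuation_ptTranslate_le_normx x w f₁ g)
      (valuation_ptTranslate_le_normx x w f₂ g)
  obtain ⟨F₁, hF₁, hF₁g⟩ := exists_ne_zero_forall_apply_ne_zero_eq_normx x w f₁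
  obtain ⟨F₂, hF₂, hF₂g⟩ := exists_ne_zero_forall_apply_ne_zero_eq_normx x w f₂
  obtain ⟨g, hg⟩ := exists_algHom_apply_ne_zero (k := k) (mul_ne_zero hF₁ hF₂)
  rw [map_mul] at hg
  rw [← hF₁g g (left_ne_zero_of_mul hg), ← hF₂g g (right_ne_zero_of_mul hg), ← map_mul, ← map_mul,
    ← ptTranslate_mul]
  exact valuation_ptTranslate_le_normx x w _ g

end HopfNorm

/-- `‖·‖ₓ` is a multiplicative non-Archimedean norm on `A` extending the trivial
valuation on `k`. -/
theorem statement2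
    {k A L : Type*} [Field k] [IsAlgClosed k]
    [CommRing A] [IsDomain A] [HopfAlgebra k A]
    (hfg : Algebra.FiniteType k A)
    [Field L] [Algebra k L]
    (v : L → NNReal)
    (hmul : ∀ a b : L, v (a * b) = v a * v b)
    (hadd : ∀ a b : L, v (a + b) ≤ max (v a) (v b))
    (hzero : ∀ a : L, v a = 0 ↔ a = 0)
    (htriv : ∀ c : k, c ≠ 0 → v (algebraMap k L c) = 1)
    (x : A →ₐ[k] L) :
    normx v x (1 : A) = 1 ∧
    (∀ f : A, normx v x f = 0 ↔ f = 0) ∧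
    (∀ f₁ f₂ : A, normx v x (f₁ * f₂) = normx v x f₁ * normx v x f₂) ∧
    (∀ f₁ f₂ : A, normx v x (f₁ + f₂) ≤ max (normx v x f₁) (normx v x f₂)) ∧
    (∀ c : k, c ≠ 0 → ∀ f : A, normx v x (algebraMap k A c * f) = normx v x f) := by
  have hv1 : v 1 = 1 := (mul_eq_left₀ fun h => one_ne_zero ((hzero 1).1 h)).1 (by
    rw [← hmul, one_mul])
  obtain ⟨w, rfl⟩ : ∃ w : Valuation L NNReal, ⇑w = v :=
    ⟨{ toFun := v, map_zero' := (hzero 0).2 rfl, map_one' := hv1, map_mul' := hmul,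
       map_add_le_max' := hadd }, rfl⟩
  have : w.IsTrivialOn k := ⟨htriv⟩
  exact ⟨normx_one x w, fun f => normx_eq_zero_iff x w, normx_mul x w, normx_add_le x w,
    fun c hc => normx_algebraMap_mul x w hc⟩
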